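/- Let k be an algebraically closed field, s > 2, m ≥ 0, F = k⟨x₁,…,x_m,y₁,y₂⟩ the free associative k-algebra, and L the k-span of its generators. Let f, f' ∈ L^{s−1} be homogeneous of degree s−1 and g ∈ L homogeneous of degree 1. If y₁·f' and f'·y₂ are linearly independent, then span{g·f, f·g} ≠ span{y₁·f', f'·y₂}. -/

import Mathlib

noncomputable section

/-- The span `L` of the generators of the free algebra `k⟨X⟩`
(the degree-one homogeneous component). -/
def faGens (k X : Type) [Field k] : Submodule k (FreeAlgebra k X) :=
  Submodule.span k (Set.range (FreeAlgebra.ι k : X → FreeAlgebra k X))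

/-!
Identify `k⟨X⟩` with the monoid algebra of the free monoid and compare leading words for a
lexicographic order; on homogeneous elements they are multiplicative. Let `t` and `u` be the
leading words of `g` and `f`, and write `y₁ f' = a₁ gf + b₁ fg`, `f' y₂ = a₂ gf + b₂ fg`.

If `tu ≠ ut`, every nonzero element of `span {gf, fg}` leads with `tu` or `ut`. These have the
same letters, so the leading words `y₁ w` and `w y₂` of `y₁ f'` and `f' y₂` have the same
letters, which forces `y₁ = y₂`. If `tu = ut`, then `gf` and `fg` have the same leading term, so
`aᵢ gf + bᵢ fg` leads with `tu` as soon as `aᵢ + bᵢ ≠ 0`, and then `yᵢ = t`. Some `aᵢ + bᵢ` is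
nonzero, since `y₁ f'` and `f' y₂` are independent, and the index `i` does not depend on the
order. Running the argument for the reversed order as well, `yᵢ` is both the largest and the
smallest letter of `g`, so `g` and `f` are monomials in `yᵢ`. Then `gf = fg`, which is
impossible as `span {gf, fg}` is two-dimensional.
-/

theorem not_linearIndependent_pair_of_mem_span_singleton {K V : Type*} [CommRing K]
    [Nontrivial K] [AddCommGroup V] [Module K V] {v₁ v₂ w : V} (h₁ : v₁ ∈ K ∙ w)
    (h₂ : v₂ ∈ K ∙ w) : ¬ LinearIndependent K ![v₁, v₂] := by
  obtain ⟨a, rfl⟩ := Submodule.mem_span_singleton.1 h₁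
  obtain ⟨b, rfl⟩ := Submodule.mem_span_singleton.1 h₂
  intro hli
  obtain ⟨-, ha⟩ := LinearIndependent.pair_iff.1 hli b (-a) (by
    rw [smul_smul, smul_smul, ← add_smul, mul_comm, neg_mul, add_neg_cancel, zero_smul])
  exact hli.ne_zero 0 (by simp [neg_eq_zero.1 ha])

theorem exists_smul_add_smul_eq_of_span_pair_eq {K V : Type*} [Field K] [AddCommGroup V]
    [Module K V] {p q v₁ v₂ : V} (hV : Submodule.span K {p, q} = Submodule.span K {v₁, v₂})
    (hli : LinearIndependent K ![v₁, v₂]) :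
    p ≠ q ∧ ∃ x₁ z₁ x₂ z₂ : K, x₁ • p + z₁ • q = v₁ ∧ x₂ • p + z₂ • q = v₂ ∧
      (x₁ + z₁ ≠ 0 ∨ x₂ + z₂ ≠ 0) := by
  have hmem : ∀ {v}, v ∈ Submodule.span K {v₁, v₂} → ∃ x z : K, x • p + z • q = v :=
    fun hv => Submodule.mem_span_pair.1 (hV ▸ hv)
  obtain ⟨x₁, z₁, h₁⟩ := hmem (Submodule.subset_span (Set.mem_insert _ _))
  obtain ⟨x₂, z₂, h₂⟩ := hmem (Submodule.subset_span (Set.mem_insert_of_mem _ rfl))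
  refine ⟨fun hpq => ?_, x₁, z₁, x₂, z₂, h₁, h₂, ?_⟩
  · refine not_linearIndependent_pair_of_mem_span_singleton (w := p) ?_ ?_ hli
    · exact Submodule.mem_span_singleton.2 ⟨x₁ + z₁, by rw [← h₁, hpq, add_smul]⟩
    · exact Submodule.mem_span_singleton.2 ⟨x₂ + z₂, by rw [← h₂, hpq, add_smul]⟩
  · by_contra! h
    refine not_linearIndependent_pair_of_mem_span_singleton (w := p - q) ?_ ?_ hli
    · exact Submodule.mem_span_singleton.2 ⟨x₁, by
        rw [← h₁, eq_neg_of_add_eq_zero_right h.1, smul_sub, neg_smul, sub_eq_add_neg]⟩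
    · exact Submodule.mem_span_singleton.2 ⟨x₂, by
        rw [← h₂, eq_neg_of_add_eq_zero_right h.2, smul_sub, neg_smul, sub_eq_add_neg]⟩

theorem List.append_lt_append_of_length_eq {α : Type*} [LinearOrder α] {a c : List α}
    (hac : a < c) (hl : a.length = c.length) (b d : List α) : a ++ b < c ++ d := by
  induction hac with
  | nil => simp at hl
  | rel h => exact List.Lex.rel h
  | cons _ ih => exact List.Lex.cons (ih (by simpa using hl))

theorem List.append_le_append_of_length_eq {α : Type*} [LinearOrder α] {a b c d : List α}
    (hl : a.length = c.length) (hac : a ≤ c) (hbd : b ≤ d) : a ++ b ≤ c ++ d := by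
  rcases hac.lt_or_eq with hac | rfl
  · exact (List.append_lt_append_of_length_eq hac hl b d).le
  · rcases hbd.lt_or_eq with hbd | rfl
    · exact le_of_lt (List.Lex.append_left _ hbd a)
    · exact le_rfl

namespace FreeMonoid

variable {α : Type*}

theorem eq_and_eq_of_mul_eq_mul {a b c d : FreeMonoid α} (h : a * b = c * d)
    (hl : a.length = c.length) : a = c ∧ b = d := by
  have := List.append_inj (congrArg toList h) hl
  exact ⟨toList.injective this.1, toList.injective this.2⟩

theorem eq_of_mul_of_eq_mul_of {u v : FreeMonoid α} {x y : α} (h : u * of x = v * of y) :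
    x = y := by
  simpa using List.append_inj_right' (congrArg toList h) rfl

theorem toList_perm_of_eq_or_eq {v a b : FreeMonoid α} (h : v = a * b ∨ v = b * a) :
    v.toList.Perm (a * b).toList := by
  rcases h with rfl | rfl
  · rfl
  · exact List.perm_append_comm

theorem eq_of_perm_of_mul_mul_of {x y : α} {w : FreeMonoid α}
    (h : (of x * w).toList.Perm (w * of y).toList) : x = y := by
  simp only [toList_mul, toList_of, List.singleton_append] at h
  have := Multiset.coe_eq_coe.2 (h.trans (List.perm_append_singleton y _))
  rw [← Multiset.cons_coe, ← Multiset.cons_coe] at this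
  exact (Multiset.cons_inj_left _).1 this

theorem toList_eq_replicate_of_commute_of {t : α} {u : FreeMonoid α} (h : Commute (of t) u) :
    u.toList = List.replicate u.length t := by
  have : Nonempty α := ⟨t⟩
  have hrot : (t :: u.toList).rotate 1 = t :: u.toList := by
    simpa using (congrArg toList h.eq).symm
  obtain ⟨a, ha⟩ := List.rotate_one_eq_self_iff_eq_replicate.1 hrot
  simp only [List.length_cons, List.replicate_succ, List.cons.injEq] at ha
  rw [ha.2, ← ha.1]
  rfl

theorem eq_of_commute_of_length_eq {t : α} {u v : FreeMonoid α} (hu : Commute (of t) u)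
    (hv : Commute (of t) v) (h : u.length = v.length) : u = v :=
  toList.injective <| by
    rw [toList_eq_replicate_of_commute_of hu, toList_eq_replicate_of_commute_of hv, h]

end FreeMonoid

namespace MonoidAlgebra

section LeadingWord

variable {k M : Type*} [Semiring k]

theorem coeff_smul_add_smul (P Q : MonoidAlgebra k M) (x y : k) (a : M) :
    (x • P + y • Q).coeff a = x * P.coeff a + y * Q.coeff a := by
  simp

variable [LinearOrder M]

theorem exists_isGreatest_support {P : MonoidAlgebra k M} (hP : P ≠ 0) :
    ∃ a, IsGreatest (P.coeff.support : Set M) a :=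
  ⟨_, Finset.isGreatest_max' _ (Finsupp.support_nonempty_iff.2 (mt coeff_eq_zero.1 hP))⟩

theorem isGreatest_support_single {a : M} {r : k} (hr : r ≠ 0) :
    IsGreatest ((single a r).coeff.support : Set M) a := by
  simp [coeff_single, hr]

theorem eq_single_of_isGreatest_of_isLeast {P : MonoidAlgebra k M} {a : M}
    (hmax : IsGreatest (P.coeff.support : Set M) a) (hmin : IsLeast (P.coeff.support : Set M) a) :
    P = single a (P.coeff a) := by
  refine coeff_injective (Finsupp.support_subset_singleton.1 fun w hw => ?_)
  exact Finset.mem_singleton.2 (le_antisymm (hmax.2 hw) (hmin.2 hw))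

theorem isGreatest_support_smul_add_smul {P Q : MonoidAlgebra k M} {a : M}
    (hP : a ∈ upperBounds (P.coeff.support : Set M))
    (hQ : a ∈ upperBounds (Q.coeff.support : Set M)) {x y : k}
    (ha : (x • P + y • Q).coeff a ≠ 0) :
    IsGreatest ((x • P + y • Q).coeff.support : Set M) a := by
  classical
  refine ⟨Finsupp.mem_support_iff.2 ha, fun w hw => ?_⟩
  rcases Finset.mem_union.1 (Finsupp.support_add hw) with h | h
  · exact hP (Finsupp.support_smul h)
  · exact hQ (Finsupp.support_smul h)

theorem isGreatest_support_smul_add_smul_of_eq [NoZeroDivisors k] {P Q : MonoidAlgebra k M}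
    {a : M} (hP : IsGreatest (P.coeff.support : Set M) a)
    (hQ : IsGreatest (Q.coeff.support : Set M) a) (hPQ : P.coeff a = Q.coeff a) {x y : k}
    (hxy : x + y ≠ 0) : IsGreatest ((x • P + y • Q).coeff.support : Set M) a := by
  refine isGreatest_support_smul_add_smul hP.2 hQ.2 ?_
  rw [coeff_smul_add_smul, ← hPQ, ← add_mul]
  exact mul_ne_zero hxy (Finsupp.mem_support_iff.1 hP.1)

theorem eq_or_eq_of_isGreatest_support_smul_add_smul [NoZeroDivisors k]
    {P Q : MonoidAlgebra k M} {a b c : M}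
    (hP : IsGreatest (P.coeff.support : Set M) a) (hQ : IsGreatest (Q.coeff.support : Set M) b)
    (hab : a ≠ b) {x y : k} (hc : IsGreatest ((x • P + y • Q).coeff.support : Set M) c) :
    c = a ∨ c = b := by
  wlog hba : b < a generalizing P Q a b x y
  · rw [add_comm] at hc
    exact (this hQ hP hab.symm hc (hab.lt_or_gt.resolve_right hba)).symm
  have hQa : Q.coeff a = 0 :=
    Finsupp.notMem_support_iff.1 fun h => (hQ.2 h).not_gt hba
  by_cases hx : x = 0
  · subst hx
    have hyc : y ≠ 0 ∧ Q.coeff c ≠ 0 := by simpa using hc.1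
    refine Or.inr (le_antisymm (hQ.2 (Finsupp.mem_support_iff.2 hyc.2)) (hc.2 ?_))
    simpa [hyc.1] using hQ.1
  · refine Or.inl (hc.unique (isGreatest_support_smul_add_smul hP.2
      (fun w hw => (hQ.2 hw).trans hba.le) ?_))
    rw [coeff_smul_add_smul, hQa, mul_zero, add_zero]
    exact mul_ne_zero hx (Finsupp.mem_support_iff.1 hP.1)

end LeadingWord

section LengthGrade

variable (k α : Type*) [Semiring k]

def lengthGrade (n : ℕ) : Submodule k (MonoidAlgebra k (FreeMonoid α)) where
  carrier := {P | ∀ w ∈ P.coeff.support, w.length = n}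
  zero_mem' w hw := by simp at hw
  add_mem' {P Q} hP hQ w hw := by
    classical
    exact (Finset.mem_union.1 (Finsupp.support_add hw)).elim (hP w) (hQ w)
  smul_mem' _ _ hP w hw := hP w (Finsupp.support_smul hw)

variable {k α}

theorem single_mem_lengthGrade (w : FreeMonoid α) (r : k) :
    single w r ∈ lengthGrade k α w.length := fun _ hv => by
  rw [Finset.mem_singleton.1 (Finsupp.support_single_subset hv)]

theorem mul_mem_lengthGrade {P Q : MonoidAlgebra k (FreeMonoid α)} {m n : ℕ}
    (hP : P ∈ lengthGrade k α m) (hQ : Q ∈ lengthGrade k α n) :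
    P * Q ∈ lengthGrade k α (m + n) := fun w hw => by
  classical
  obtain ⟨a, ha, b, hb, rfl⟩ := Finset.mem_mul.1 (support_coeff_mul_subset P Q hw)
  rw [FreeMonoid.length_mul, hP a ha, hQ b hb]

theorem lengthGrade_one_pow_le {k : Type*} [CommSemiring k] (n : ℕ) :
    lengthGrade k α 1 ^ n ≤ lengthGrade k α n := by
  induction n with
  | zero => exact Submodule.one_le.2 (single_mem_lengthGrade 1 1)
  | succ n ih =>
    rw [pow_succ]
    exact Submodule.mul_le.2 fun P hP Q hQ => mul_mem_lengthGrade (ih hP) hQ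

theorem coeff_mul_mul_of_mem_lengthGrade {P : MonoidAlgebra k (FreeMonoid α)} {n : ℕ}
    (hP : P ∈ lengthGrade k α n) (Q : MonoidAlgebra k (FreeMonoid α)) {a : FreeMonoid α}
    (ha : a.length = n) (b : FreeMonoid α) :
    (P * Q).coeff (a * b) = P.coeff a * Q.coeff b :=
  coeff_mul_mul_of_uniqueMul fun _ _ ha' _ h =>
    FreeMonoid.eq_and_eq_of_mul_eq_mul h (by rw [hP _ ha', ha])

theorem isGreatest_support_mul [LinearOrder (FreeMonoid α)] [NoZeroDivisors k]
    (hmono : ∀ ⦃a b c d : FreeMonoid α⦄, a.length = c.length → a ≤ c → b ≤ d → a * b ≤ c * d)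
    {P Q : MonoidAlgebra k (FreeMonoid α)} {n : ℕ} (hP : P ∈ lengthGrade k α n)
    {a b : FreeMonoid α} (ha : IsGreatest (P.coeff.support : Set _) a)
    (hb : IsGreatest (Q.coeff.support : Set _) b) :
    IsGreatest ((P * Q).coeff.support : Set _) (a * b) := by
  classical
  refine ⟨?_, fun w hw => ?_⟩
  · rw [Finset.mem_coe, Finsupp.mem_support_iff,
      coeff_mul_mul_of_mem_lengthGrade hP Q (hP a ha.1)]
    exact mul_ne_zero (Finsupp.mem_support_iff.1 ha.1) (Finsupp.mem_support_iff.1 hb.1)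
  · obtain ⟨a', ha', b', hb', rfl⟩ := Finset.mem_mul.1 (support_coeff_mul_subset P Q hw)
    exact hmono (by rw [hP a' ha', hP a ha.1]) (ha.2 ha') (hb.2 hb')

end LengthGrade

section SpanPair

open FreeMonoid (toList)

variable {k α : Type*}

theorem exists_isGreatest_of_smul_add_smul_eq [CommSemiring k] [NoZeroDivisors k] [Nontrivial k]
    [ord : LinearOrder (FreeMonoid α)]
    (hmono : ∀ ⦃a b c d : FreeMonoid α⦄, a.length = c.length → a ≤ c → b ≤ d → a * b ≤ c * d)
    {G F F' : MonoidAlgebra k (FreeMonoid α)} {n n' : ℕ} (hG : G ∈ lengthGrade k α 1)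
    (hF : F ∈ lengthGrade k α n) (hF' : F' ∈ lengthGrade k α n')
    (hG0 : G ≠ 0) (hF0 : F ≠ 0) (hF'0 : F' ≠ 0) {y₁ y₂ : α} (hy : y₁ ≠ y₂) {x₁ z₁ x₂ z₂ : k}
    (h₁ : x₁ • (G * F) + z₁ • (F * G) = single (FreeMonoid.of y₁) 1 * F')
    (h₂ : x₂ • (G * F) + z₂ • (F * G) = F' * single (FreeMonoid.of y₂) 1) :
    ∃ t u, IsGreatest (G.coeff.support : Set _) (FreeMonoid.of t) ∧
      IsGreatest (F.coeff.support : Set _) u ∧ Commute (FreeMonoid.of t) u ∧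
      (x₁ + z₁ ≠ 0 → y₁ = t) ∧ (x₂ + z₂ ≠ 0 → y₂ = t) := by
  obtain ⟨a, ha⟩ := exists_isGreatest_support hG0
  obtain ⟨t, rfl⟩ := FreeMonoid.length_eq_one.1 (hG a ha.1)
  obtain ⟨u, hu⟩ := exists_isGreatest_support hF0
  obtain ⟨w, hw⟩ := exists_isGreatest_support hF'0
  have hGF := isGreatest_support_mul hmono hG ha hu
  have hFG := isGreatest_support_mul hmono hF hu ha
  have hv₁ := isGreatest_support_mul hmono (single_mem_lengthGrade _ _)
    (isGreatest_support_single (one_ne_zero (α := k)) (a := FreeMonoid.of y₁)) hw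
  have hv₂ := isGreatest_support_mul hmono hF' hw
    (isGreatest_support_single (one_ne_zero (α := k)) (a := FreeMonoid.of y₂))
  rw [← h₁] at hv₁
  rw [← h₂] at hv₂
  have htu : Commute (FreeMonoid.of t) u := by
    by_contra hne
    refine hy (FreeMonoid.eq_of_perm_of_mul_mul_of (w := w) ?_)
    exact (FreeMonoid.toList_perm_of_eq_or_eq
      (eq_or_eq_of_isGreatest_support_smul_add_smul hGF hFG hne hv₁)).trans
      (FreeMonoid.toList_perm_of_eq_or_eq
        (eq_or_eq_of_isGreatest_support_smul_add_smul hGF hFG hne hv₂)).symm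
  have hlead : ∀ {x z : k}, x + z ≠ 0 →
      IsGreatest ((x • (G * F) + z • (F * G)).coeff.support : Set _) (FreeMonoid.of t * u) := by
    refine fun hxz => isGreatest_support_smul_add_smul_of_eq hGF (htu.eq ▸ hFG) ?_ hxz
    rw [coeff_mul_mul_of_mem_lengthGrade hG F rfl, htu.eq,
      coeff_mul_mul_of_mem_lengthGrade hF G (hF u hu.1), mul_comm]
  refine ⟨t, u, ha, hu, htu, fun hxz => ?_, fun hxz => ?_⟩
  · exact FreeMonoid.of_injective
      (FreeMonoid.eq_and_eq_of_mul_eq_mul (hv₁.unique (hlead hxz)) rfl).1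
  · rw [htu.eq] at hlead
    exact FreeMonoid.eq_of_mul_of_eq_mul_of (hv₂.unique (hlead hxz))

theorem span_mul_pair_ne [Field k] {G F F' : MonoidAlgebra k (FreeMonoid α)} {n n' : ℕ}
    (hG : G ∈ lengthGrade k α 1) (hF : F ∈ lengthGrade k α n) (hF' : F' ∈ lengthGrade k α n')
    {y₁ y₂ : α} (hy : y₁ ≠ y₂)
    (hli : LinearIndependent k
      ![single (FreeMonoid.of y₁) 1 * F', F' * single (FreeMonoid.of y₂) 1]) :
    Submodule.span k {G * F, F * G} ≠
      Submodule.span k {single (FreeMonoid.of y₁) 1 * F', F' * single (FreeMonoid.of y₂) 1} := by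
  intro hV
  obtain ⟨hGF, x₁, z₁, x₂, z₂, h₁, h₂, hxz⟩ := exists_smul_add_smul_eq_of_span_pair_eq hV hli
  have hG0 : G ≠ 0 := by rintro rfl; simp at hGF
  have hF0 : F ≠ 0 := by rintro rfl; simp at hGF
  have hF'0 : F' ≠ 0 := by rintro rfl; exact hli.ne_zero 0 (by simp)
  let _ : LinearOrder α := IsWellOrder.linearOrder WellOrderingRel
  obtain ⟨t, u, hGt, hFu, htu, ht₁, ht₂⟩ := exists_isGreatest_of_smul_add_smul_eq
    (ord := .lift' toList toList.injective)
    (fun _ _ _ _ hl hac hbd => List.append_le_append_of_length_eq hl hac hbd)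
    hG hF hF' hG0 hF0 hF'0 hy h₁ h₂
  obtain ⟨t', u', hGt', hFu', htu', ht₁', ht₂'⟩ := exists_isGreatest_of_smul_add_smul_eq
    (ord := .lift' (OrderDual.toDual ∘ toList) toList.injective)
    (fun _ _ _ _ hl hac hbd => List.append_le_append_of_length_eq hl.symm hac hbd)
    hG hF hF' hG0 hF0 hF'0 hy h₁ h₂
  obtain rfl : t = t' := by
    rcases hxz with h | h
    · exact (ht₁ h).symm.trans (ht₁' h)
    · exact (ht₂ h).symm.trans (ht₂' h)
  obtain rfl : u = u' :=
    FreeMonoid.eq_of_commute_of_length_eq htu htu' (by rw [hF u hFu.1, hF u' hFu'.1])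
  let _ : LinearOrder (FreeMonoid α) := .lift' toList toList.injective
  -- `hGt'` and `hFu'` are `IsLeast` statements for this order
  apply hGF
  rw [eq_single_of_isGreatest_of_isLeast hGt hGt', eq_single_of_isGreatest_of_isLeast hFu hFu',
    single_mul_single, single_mul_single, htu.eq, mul_comm]

end SpanPair

end MonoidAlgebra

theorem FreeAlgebra.equivMonoidAlgebraFreeMonoid_ι {k X : Type*} [CommSemiring k] (x : X) :
    equivMonoidAlgebraFreeMonoid (ι k x) = MonoidAlgebra.single (FreeMonoid.of x) (1 : k) := by
  simp [equivMonoidAlgebraFreeMonoid]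

theorem FreeAlgebra.equivMonoidAlgebraFreeMonoid_mem_lengthGrade {k X : Type} [Field k] {n : ℕ}
    {p : FreeAlgebra k X} (hp : p ∈ faGens k X ^ n) :
    equivMonoidAlgebraFreeMonoid p ∈ MonoidAlgebra.lengthGrade k X n := by
  let E := (equivMonoidAlgebraFreeMonoid : FreeAlgebra k X ≃ₐ[k] _).toAlgHom
  have hgens : (faGens k X).map E.toLinearMap ≤ MonoidAlgebra.lengthGrade k X 1 := by
    rw [faGens, Submodule.map_span, Submodule.span_le]
    rintro _ ⟨_, ⟨x, rfl⟩, rfl⟩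
    simpa [E, equivMonoidAlgebraFreeMonoid_ι] using
      MonoidAlgebra.single_mem_lengthGrade (FreeMonoid.of x) (1 : k)
  have hpow := Submodule.mem_map_of_mem (f := E.toLinearMap) hp
  rw [Submodule.map_pow] at hpow
  exact MonoidAlgebra.lengthGrade_one_pow_le n (pow_le_pow_left' hgens n hpow)

theorem stmt14_general (k : Type) [Field k] (s m : ℕ)
    (f f' : FreeAlgebra k (Fin m ⊕ Fin 2))
    (hf : f ∈ faGens k (Fin m ⊕ Fin 2) ^ (s - 1))
    (hf' : f' ∈ faGens k (Fin m ⊕ Fin 2) ^ (s - 1))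
    (g : FreeAlgebra k (Fin m ⊕ Fin 2)) (hg : g ∈ faGens k (Fin m ⊕ Fin 2))
    (hli : LinearIndependent k
      ![FreeAlgebra.ι k (Sum.inr 0 : Fin m ⊕ Fin 2) * f',
        f' * FreeAlgebra.ι k (Sum.inr 1 : Fin m ⊕ Fin 2)]) :
    Submodule.span k {g * f, f * g} ≠
      Submodule.span k
        {FreeAlgebra.ι k (Sum.inr 0 : Fin m ⊕ Fin 2) * f',
         f' * FreeAlgebra.ι k (Sum.inr 1 : Fin m ⊕ Fin 2)} := by
  let E := (FreeAlgebra.equivMonoidAlgebraFreeMonoid : FreeAlgebra k (Fin m ⊕ Fin 2) ≃ₐ[k] _)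
  intro hV
  refine MonoidAlgebra.span_mul_pair_ne
    (FreeAlgebra.equivMonoidAlgebraFreeMonoid_mem_lengthGrade (n := 1) (by rwa [pow_one]))
    (FreeAlgebra.equivMonoidAlgebraFreeMonoid_mem_lengthGrade hf)
    (FreeAlgebra.equivMonoidAlgebraFreeMonoid_mem_lengthGrade hf')
    (y₁ := Sum.inr 0) (y₂ := Sum.inr 1) (by simp) ?_ ?_
  · refine LinearIndependent.pair_iff.2 fun a b hab =>
      LinearIndependent.pair_iff.1 hli a b (E.injective ?_)
    simpa [FreeAlgebra.equivMonoidAlgebraFreeMonoid_ι, E] using hab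
  · simpa [Submodule.map_span, Set.image_pair, FreeAlgebra.equivMonoidAlgebraFreeMonoid_ι, E]
      using congrArg (Submodule.map E.toLinearMap) hV

/-- Let `k` be an algebraically closed field, `s > 2`, `m ≥ 0`,
`F = k⟨x₁,…,x_m,y₁,y₂⟩` (with `y₁, y₂` the generators indexed by `Sum.inr 0, Sum.inr 1`)
and `L` the span of the generators.  Let `f, f' ∈ L^{s−1}` and `g ∈ L`.
If `y₁·f'` and `f'·y₂` are linearly independent, then
`span{g·f, f·g} ≠ span{y₁·f', f'·y₂}`. -/
theorem stmt14 (k : Type) [Field k] [IsAlgClosed k] (s m : ℕ) (hs : 2 < s)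
    (f f' : FreeAlgebra k (Fin m ⊕ Fin 2))
    (hf : f ∈ faGens k (Fin m ⊕ Fin 2) ^ (s - 1))
    (hf' : f' ∈ faGens k (Fin m ⊕ Fin 2) ^ (s - 1))
    (g : FreeAlgebra k (Fin m ⊕ Fin 2)) (hg : g ∈ faGens k (Fin m ⊕ Fin 2))
    (hli : LinearIndependent k
      ![FreeAlgebra.ι k (Sum.inr 0 : Fin m ⊕ Fin 2) * f',
        f' * FreeAlgebra.ι k (Sum.inr 1 : Fin m ⊕ Fin 2)]) :
    Submodule.span k {g * f, f * g} ≠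
      Submodule.span k
        {FreeAlgebra.ι k (Sum.inr 0 : Fin m ⊕ Fin 2) * f',
         f' * FreeAlgebra.ι k (Sum.inr 1 : Fin m ⊕ Fin 2)} :=
  stmt14_general k s m f f' hf hf' g hg hli

end
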